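/- arXiv:2408.14746 — 5 statements merged into one kernel-verified Lean document; each statement's English description precedes it below -/
import Mathlib

section
/- Let v, a > 0, l ≥ v²/a, and let C_r, m, g, ρ, A, C_d, D, R be real constants. Define the three-phase power profile P : ℝ → ℝ by P(t) = (C_r·m·g + (1/2)·ρ·A·C_d·(a·t)² + m·a)·(a·t) for 0 ≤ t ≤ v/a, P(t) = (C_r·m·g + (1/2)·ρ·A·C_d·v²)·v for v/a ≤ t ≤ l/v, and P(t) = (C_r·m·g + (1/2)·ρ·A·C_d·(v − a·(t − l/v))² − m·a)·(v − a·(t − l/v)) for l/v ≤ t ≤ l/v + v/a. Then the efficiency-weighted total energy D·∫₀^{l/v} P(t) dt + R·∫_{l/v}^{l/v + v/a} P(t) dt equals D·(C_r·m·g + (1/4)·ρ·A·C_d·v² + m·a)·v²/(2a) + D·(C_r·m·g + (1/2)·ρ·A·C_d·v²)·(l − v²/a) + R·(C_r·m·g + (1/4)·ρ·A·C_d·v² − m·a)·v²/(2a), i.e. the paper's total travel-energy formula q↑ + q→ + q↓ (eqs. (14)–(17)). -/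
open intervalIntegral

/-!
On each phase the speed is affine in time, `s(t) = s₀ + α (t - t₀)`, so `ds = α dt` and the
phase energy is `α⁻¹ ∫ (c + k s² + M α) s ds`, a polynomial in the end speeds. The cruising
phase contributes a constant power over time `l / v - v / a`, i.e. over distance `l - v² / a`.
-/

/-- In the paper's notation `c = C_r m g`, `k = ρ A C_d / 2` and `M = m`. -/
def tractivePower (c k M s α : ℝ) : ℝ := (c + k * s ^ 2 + M * α) * s

theorem hasDerivAt_tractiveEnergy_affineSpeed (c k M s₀ α t₀ t : ℝ) (hα : α ≠ 0) :
    HasDerivAt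
      (fun t => ((c + M * α) / 2 * (s₀ + α * (t - t₀)) ^ 2 + k / 4 * (s₀ + α * (t - t₀)) ^ 4) / α)
      (tractivePower c k M (s₀ + α * (t - t₀)) α) t := by
  have hs : HasDerivAt (fun t => s₀ + α * (t - t₀)) α t := by
    simpa using (((hasDerivAt_id t).sub_const t₀).const_mul α).const_add s₀
  refine ((((hs.pow 2).const_mul ((c + M * α) / 2)).add
    ((hs.pow 4).const_mul (k / 4))).div_const α).congr_deriv ?_
  unfold tractivePower
  field_simp
  ring

theorem integral_tractivePower_affineSpeed (c k M s₀ α t₀ t₁ : ℝ) (hα : α ≠ 0) :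
    ∫ t in t₀..t₁, tractivePower c k M (s₀ + α * (t - t₀)) α =
      ((c + M * α) / 2 * ((s₀ + α * (t₁ - t₀)) ^ 2 - s₀ ^ 2)
        + k / 4 * ((s₀ + α * (t₁ - t₀)) ^ 4 - s₀ ^ 4)) / α := by
  rw [integral_eq_sub_of_hasDerivAt
    (fun t _ => hasDerivAt_tractiveEnergy_affineSpeed c k M s₀ α t₀ t hα)
    ((by unfold tractivePower; fun_prop : Continuous _).intervalIntegrable _ _)]
  ring

theorem integral_tractivePower_accelerate_from_rest (c k M v a : ℝ) (ha : a ≠ 0) :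
    ∫ t in (0:ℝ)..(v / a), tractivePower c k M (a * t) a
      = (c + k / 2 * v ^ 2 + M * a) * (v ^ 2 / (2 * a)) := by
  have h := integral_tractivePower_affineSpeed c k M 0 a 0 (v / a) ha
  simp only [zero_add, sub_zero] at h
  rw [h]
  field_simp
  ring

theorem integral_tractivePower_decelerate_to_rest (c k M v a t₀ : ℝ) (ha : a ≠ 0) :
    ∫ t in t₀..(t₀ + v / a), tractivePower c k M (v - a * (t - t₀)) (-a)
      = (c + k / 2 * v ^ 2 - M * a) * (v ^ 2 / (2 * a)) := by
  have h := integral_tractivePower_affineSpeed c k M v (-a) t₀ (t₀ + v / a) (neg_ne_zero.mpr ha)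
  simp only [neg_mul, ← sub_eq_add_neg] at h
  rw [h]
  field_simp
  ring

theorem integral_eq_integral_add_integral_of_eqOn_Ioo {f g h : ℝ → ℝ} {a b c : ℝ}
    (hab : a ≤ b) (hbc : b ≤ c) (hg : IntervalIntegrable g MeasureTheory.volume a b)
    (hh : IntervalIntegrable h MeasureTheory.volume b c)
    (hfg : Set.EqOn f g (Set.Ioo a b)) (hfh : Set.EqOn f h (Set.Ioo b c)) :
    ∫ t in a..c, f t = (∫ t in a..b, g t) + ∫ t in b..c, h t := by
  have hgf : Set.EqOn g f (Set.uIoo a b) := by rw [Set.uIoo_of_le hab]; exact hfg.symm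
  have hhf : Set.EqOn h f (Set.uIoo b c) := by rw [Set.uIoo_of_le hbc]; exact hfh.symm
  rw [← integral_add_adjacent_intervals (hg.congr_uIoo hgf) (hh.congr_uIoo hhf),
    integral_congr_uIoo hgf, integral_congr_uIoo hhf]

/-- The efficiency-weighted total energy of the three-phase trip
(acceleration from rest to `v` with acceleration `a`, cruising at `v`,
deceleration to rest, over total distance `l ≥ v²/a`) equals the paper's total
travel-energy formula q↑ + q→ + q↓ (eqs. (14)–(17)), where `D` weights the
acceleration and cruising phases and `R` weights the deceleration phase. -/
theorem three_phase_travel_energy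
    (v a l C_r m g ρ A C_d D R : ℝ)
    (hv : 0 < v) (ha : 0 < a) (hl : v^2 / a ≤ l) :
    D * (∫ t in (0:ℝ)..(l / v),
          (if t ≤ v / a then
              (C_r * m * g + (1/2) * ρ * A * C_d * (a * t)^2 + m * a) * (a * t)
           else if t ≤ l / v then
              (C_r * m * g + (1/2) * ρ * A * C_d * v^2) * v
           else
              (C_r * m * g + (1/2) * ρ * A * C_d * (v - a * (t - l / v))^2
                - m * a) * (v - a * (t - l / v))))
      + R * (∫ t in (l / v)..(l / v + v / a),
          (if t ≤ v / a then
              (C_r * m * g + (1/2) * ρ * A * C_d * (a * t)^2 + m * a) * (a * t)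
           else if t ≤ l / v then
              (C_r * m * g + (1/2) * ρ * A * C_d * v^2) * v
           else
              (C_r * m * g + (1/2) * ρ * A * C_d * (v - a * (t - l / v))^2
                - m * a) * (v - a * (t - l / v))))
      = D * (C_r * m * g + (1/4) * ρ * A * C_d * v^2 + m * a) * (v^2 / (2 * a))
        + D * (C_r * m * g + (1/2) * ρ * A * C_d * v^2) * (l - v^2 / a)
        + R * (C_r * m * g + (1/4) * ρ * A * C_d * v^2 - m * a)
            * (v^2 / (2 * a)) := by
  have hva : 0 ≤ v / a := by positivity
  have hcruise : v / a ≤ l / v := by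
    rw [div_le_div_iff₀ ha hv]
    nlinarith [(div_le_iff₀ ha).mp hl]
  have hdecel : l / v ≤ l / v + v / a := by linarith
  rw [integral_eq_integral_add_integral_of_eqOn_Ioo hva hcruise
      (g := fun t => tractivePower (C_r * m * g) ((1/2) * ρ * A * C_d) m (a * t) a)
      (h := fun _ => (C_r * m * g + (1/2) * ρ * A * C_d * v^2) * v)
      (Continuous.intervalIntegrable (by unfold tractivePower; fun_prop) _ _)
      intervalIntegrable_const
      (fun t ht => by simp only [if_pos ht.2.le, tractivePower])
      (fun t ht => by simp only [if_neg (not_le.mpr ht.1), if_pos ht.2.le]),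
    integral_congr_Ioo_of_le hdecel (g := fun t =>
      tractivePower (C_r * m * g) ((1/2) * ρ * A * C_d) m (v - a * (t - l / v)) (-a))
      (fun t ht => by
        simp only [if_neg (not_le.mpr (hcruise.trans_lt ht.1)), if_neg (not_le.mpr ht.1),
          tractivePower]
        ring),
    integral_tractivePower_accelerate_from_rest _ _ _ _ _ ha.ne',
    integral_tractivePower_decelerate_to_rest _ _ _ _ _ _ ha.ne', integral_const, smul_eq_mul]
  field_simp
  ring
end

section
/- Let v, a > 0 with v²/a ≤ 100 and let C_r, m, g, ρ, A, C_d, D be real constants. With Q the paper's improved per-100-m energy function (eq. (5)) and T(l) = D·(C_r·m·g + (1/2)·ρ·A·C_d·v²)·l the traditional energy function (eq. (1)), for every l in the cruising range [v²/(2a), 100 − v²/(2a)] the gap Q(l) − T(l) equals the constant D·(m·a − (1/4)·ρ·A·C_d·v²)·v²/(2a), independent of l. Consequently, if D > 0 and m·a > (1/4)·ρ·A·C_d·v², then Q(l) > T(l) throughout the cruising range: accounting for the start-stop process yields strictly higher predicted energy consumption than the traditional model, and the two energy–distance curves are parallel on the cruising range. -/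
/-- The paper's improved per-100-m cumulative energy function (eq. (5)). -/
noncomputable def improvedEnergy (v a C_r m g ρ A C_d D R : ℝ) (l : ℝ) : ℝ :=
  if l ≤ v^2 / (2*a) then
    D * (C_r*m*g + (1/4)*ρ*A*C_d*v^2 + m*a) * l
  else if l ≤ 100 - v^2 / (2*a) then
    D * (C_r*m*g + (1/4)*ρ*A*C_d*v^2 + m*a) * (v^2 / (2*a))
      + D * (C_r*m*g + (1/2)*ρ*A*C_d*v^2) * (l - v^2 / (2*a))
  else
    D * (C_r*m*g + (1/4)*ρ*A*C_d*v^2 + m*a) * (v^2 / (2*a))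
      + D * (C_r*m*g + (1/2)*ρ*A*C_d*v^2) * ((100 - v^2 / (2*a)) - v^2 / (2*a))
      + R * (C_r*m*g + (1/4)*ρ*A*C_d*v^2 - m*a) * (l - (100 - v^2 / (2*a)))

/-- The traditional per-100-m energy function (eq. (1)), which ignores the
start-stop process. -/
noncomputable def traditionalEnergy (v C_r m g ρ A C_d D : ℝ) (l : ℝ) : ℝ :=
  D * (C_r*m*g + (1/2)*ρ*A*C_d*v^2) * l

/-! On the cruising range both models grow at the same rate `D·(C_r·m·g + ½·ρ·A·C_d·v²)` per metre,
so their gap is the gap at the end `s = v²/(2a)` of the acceleration phase, over which the improved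
model charges an extra `D·(m·a − ¼·ρ·A·C_d·v²)` per metre. -/

lemma improvedEnergy_of_mem_cruising {v a C_r m g ρ A C_d D R l : ℝ}
    (hl : l ∈ Set.Icc (v^2 / (2*a)) (100 - v^2 / (2*a))) :
    improvedEnergy v a C_r m g ρ A C_d D R l =
      D * (C_r*m*g + (1/4)*ρ*A*C_d*v^2 + m*a) * (v^2 / (2*a))
        + D * (C_r*m*g + (1/2)*ρ*A*C_d*v^2) * (l - v^2 / (2*a)) := by
  obtain ⟨h_start, h_end⟩ := hl
  unfold improvedEnergy
  by_cases h_accel : l ≤ v^2 / (2*a)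
  · obtain rfl : l = v^2 / (2*a) := le_antisymm h_accel h_start
    rw [if_pos le_rfl]
    ring
  · rw [if_neg h_accel, if_pos h_end]

lemma improvedEnergy_sub_traditionalEnergy_of_mem_cruising {v a C_r m g ρ A C_d D R l : ℝ}
    (hl : l ∈ Set.Icc (v^2 / (2*a)) (100 - v^2 / (2*a))) :
    improvedEnergy v a C_r m g ρ A C_d D R l - traditionalEnergy v C_r m g ρ A C_d D l
      = D * (m*a - (1/4)*ρ*A*C_d*v^2) * (v^2 / (2*a)) := by
  rw [improvedEnergy_of_mem_cruising hl, traditionalEnergy]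
  ring

lemma traditionalEnergy_lt_improvedEnergy_of_mem_cruising {v a C_r m g ρ A C_d D R l : ℝ}
    (hv : 0 < v) (ha : 0 < a) (hD : 0 < D) (h_accel : (1/4)*ρ*A*C_d*v^2 < m*a)
    (hl : l ∈ Set.Icc (v^2 / (2*a)) (100 - v^2 / (2*a))) :
    traditionalEnergy v C_r m g ρ A C_d D l < improvedEnergy v a C_r m g ρ A C_d D R l := by
  have h_gap_pos : 0 < D * (m*a - (1/4)*ρ*A*C_d*v^2) * (v^2 / (2*a)) :=
    mul_pos (mul_pos hD (sub_pos.mpr h_accel)) (by positivity)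
  rw [← improvedEnergy_sub_traditionalEnergy_of_mem_cruising hl] at h_gap_pos
  exact sub_pos.mp h_gap_pos

theorem improved_vs_traditional_cruising_gap_general
    (v a C_r m g ρ A C_d D R : ℝ)
    (hv : 0 < v) (ha : 0 < a) :
    (∀ l ∈ Set.Icc (v^2 / (2*a)) (100 - v^2 / (2*a)),
        improvedEnergy v a C_r m g ρ A C_d D R l
            - traditionalEnergy v C_r m g ρ A C_d D l
          = D * (m*a - (1/4)*ρ*A*C_d*v^2) * (v^2 / (2*a))) ∧
    (0 < D → (1/4)*ρ*A*C_d*v^2 < m*a →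
      ∀ l ∈ Set.Icc (v^2 / (2*a)) (100 - v^2 / (2*a)),
        traditionalEnergy v C_r m g ρ A C_d D l
          < improvedEnergy v a C_r m g ρ A C_d D R l) :=
  ⟨fun _ hl => improvedEnergy_sub_traditionalEnergy_of_mem_cruising hl,
    fun hD h_accel _ hl => traditionalEnergy_lt_improvedEnergy_of_mem_cruising hv ha hD h_accel hl⟩

/-- On the cruising range `[v²/(2a), 100 − v²/(2a)]` the gap between the
improved energy model (eq. (5)) and the traditional model (eq. (1)) is the
constant `D·(m·a − (1/4)·ρ·A·C_d·v²)·v²/(2a)`, independent of `l`; hence if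
`D > 0` and `m·a > (1/4)·ρ·A·C_d·v²`, the improved model predicts strictly
higher energy consumption throughout the cruising range, and the two
energy–distance curves are parallel there. -/
theorem improved_vs_traditional_cruising_gap
    (v a C_r m g ρ A C_d D R : ℝ)
    (hv : 0 < v) (ha : 0 < a) (h100 : v^2 / a ≤ 100) :
    (∀ l ∈ Set.Icc (v^2 / (2*a)) (100 - v^2 / (2*a)),
        improvedEnergy v a C_r m g ρ A C_d D R l
            - traditionalEnergy v C_r m g ρ A C_d D l
          = D * (m*a - (1/4)*ρ*A*C_d*v^2) * (v^2 / (2*a))) ∧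
    (0 < D → (1/4)*ρ*A*C_d*v^2 < m*a →
      ∀ l ∈ Set.Icc (v^2 / (2*a)) (100 - v^2 / (2*a)),
        traditionalEnergy v C_r m g ρ A C_d D l
          < improvedEnergy v a C_r m g ρ A C_d D R l) :=
  improved_vs_traditional_cruising_gap_general v a C_r m g ρ A C_d D R hv ha
end

section
/- Let v, a > 0 with v²/a ≤ 100 and let C_r, m, g, ρ, A, C_d, D, R be real constants. With Q the paper's improved per-100-m energy function (eq. (5)) and T(l) = D·(C_r·m·g + (1/2)·ρ·A·C_d·v²)·l the traditional energy function (eq. (1)), the gap over a full 100-meter segment satisfies Q(100) − T(100) = (v²/(2a))·[(D − R)·(m·a − C_r·m·g) − ((3/4)·D − (1/4)·R)·ρ·A·C_d·v²]. In particular, if (D − R)·(m·a − C_r·m·g) > ((3/4)·D − (1/4)·R)·ρ·A·C_d·v², then Q(100) > T(100): the traditional model strictly underestimates the total energy consumed over the segment. -/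
/-! Write `s = v²/(2a)` for the length of the acceleration and of the braking stretch. When
`0 < s < 100` the third branch of `Q` applies at `l = 100`: the cruise stretch of length `100 − 2s`
is billed exactly as in the traditional model, so the gap is `s` times the acceleration and
braking rates minus twice the cruise rate, which is the bracket in the theorem. -/

theorem improvedEnergy_hundred_sub_traditionalEnergy_hundred {v a : ℝ} (C_r m g ρ A C_d D R : ℝ)
    (hs₀ : 0 < v^2 / (2*a)) (hs₁ : v^2 / (2*a) < 100) :
    improvedEnergy v a C_r m g ρ A C_d D R 100 - traditionalEnergy v C_r m g ρ A C_d D 100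
      = (v^2 / (2*a)) * ((D - R) * (m*a - C_r*m*g) - ((3/4)*D - (1/4)*R) * ρ*A*C_d*v^2) := by
  rw [improvedEnergy, traditionalEnergy, if_neg (by linarith), if_neg (by linarith)]
  ring

theorem sq_div_two_mul_pos_and_le_half {v a L : ℝ} (hv : v ≠ 0) (ha : 0 < a)
    (hL : v^2 / a ≤ L) : 0 < v^2 / (2*a) ∧ v^2 / (2*a) ≤ L / 2 := by
  refine ⟨by positivity, ?_⟩
  rw [mul_comm, ← div_div]
  linarith

/-- Over a full 100-meter segment the gap between the improved model (eq. (5))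
and the traditional model (eq. (1)) is
`(v²/(2a))·[(D − R)·(m·a − C_r·m·g) − ((3/4)·D − (1/4)·R)·ρ·A·C_d·v²]`;
in particular, if `(D − R)·(m·a − C_r·m·g) > ((3/4)·D − (1/4)·R)·ρ·A·C_d·v²`,
the traditional model strictly underestimates total energy consumption. -/
theorem improved_vs_traditional_full_segment_gap
    (v a C_r m g ρ A C_d D R : ℝ)
    (hv : 0 < v) (ha : 0 < a) (h100 : v^2 / a ≤ 100) :
    (improvedEnergy v a C_r m g ρ A C_d D R 100
        - traditionalEnergy v C_r m g ρ A C_d D 100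
      = (v^2 / (2*a)) * ((D - R) * (m*a - C_r*m*g)
          - ((3/4)*D - (1/4)*R) * ρ*A*C_d*v^2)) ∧
    (((3/4)*D - (1/4)*R) * ρ*A*C_d*v^2 < (D - R) * (m*a - C_r*m*g) →
      traditionalEnergy v C_r m g ρ A C_d D 100
        < improvedEnergy v a C_r m g ρ A C_d D R 100) := by
  obtain ⟨hs₀, hs₅₀⟩ := sq_div_two_mul_pos_and_le_half hv.ne' ha h100
  have gap := improvedEnergy_hundred_sub_traditionalEnergy_hundred C_r m g ρ A C_d D R hs₀
    (by linarith)
  refine ⟨gap, fun hrates => ?_⟩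
  have hgap_pos := mul_pos hs₀ (sub_pos.2 hrates)
  linarith
end

section
/- Let v, a > 0 with v²/a ≤ 100 and let C_r, m, g, ρ, A, C_d, D, R be real constants. Then the value Q(100) of the paper's piecewise per-100-m energy function (eq. (5)) equals the efficiency-weighted integral energy of the full three-phase 100-meter trip: Q(100) = D·∫₀^{100/v} P(t) dt + R·∫_{100/v}^{100/v + v/a} P(t) dt, where P(t) = (C_r·m·g + (1/2)·ρ·A·C_d·(a·t)² + m·a)·(a·t) for 0 ≤ t ≤ v/a, P(t) = (C_r·m·g + (1/2)·ρ·A·C_d·v²)·v for v/a ≤ t ≤ 100/v, and P(t) = (C_r·m·g + (1/2)·ρ·A·C_d·(v − a·(t − 100/v))² − m·a)·(v − a·(t − 100/v)) for 100/v ≤ t ≤ 100/v + v/a. -/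
open intervalIntegral

/-!
On each phase the speed `s` is affine in time with slope `α ∈ {a, 0, -a}`, and the power is
`(k + b s²) s` with `k = C_r m g + m α` and `b = ρ A C_d / 2`. Substituting `s` for `t` in the
two ramps turns their energy into `(k v²/2 + b v⁴/4) / a = (C_r m g ± m a + b v²/2) · v²/(2a)`, which is exactly a
ramp term of eq. (5); the cruise contributes constant power `(C_r m g + b v²) v` for a time
`100/v - v/a`, i.e. the middle term over the distance `100 - v²/a`.
-/

open Set MeasureTheory

theorem integral_add_mul_sq_mul (k b s₀ s₁ : ℝ) :
    ∫ s in s₀..s₁, (k + b * s ^ 2) * s = k / 2 * (s₁ ^ 2 - s₀ ^ 2) + b / 4 * (s₁ ^ 4 - s₀ ^ 4) := by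
  have hderiv : ∀ s ∈ uIcc s₀ s₁,
      HasDerivAt (fun s => k / 2 * s ^ 2 + b / 4 * s ^ 4) ((k + b * s ^ 2) * s) s := by
    intro s _
    refine (((hasDerivAt_pow 2 s).const_mul (k / 2)).add
      ((hasDerivAt_pow 4 s).const_mul (b / 4))).congr_deriv ?_
    push_cast; ring
  rw [integral_eq_sub_of_hasDerivAt hderiv (Continuous.intervalIntegrable (by fun_prop) _ _)]
  ring

theorem integral_add_mul_sq_mul_comp_affine (k b s₀ α t₀ t₁ : ℝ) (hα : α ≠ 0) :
    ∫ t in t₀..t₁, (k + b * (s₀ + α * (t - t₀)) ^ 2) * (s₀ + α * (t - t₀)) =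
      (k / 2 * ((s₀ + α * (t₁ - t₀)) ^ 2 - s₀ ^ 2)
        + b / 4 * ((s₀ + α * (t₁ - t₀)) ^ 4 - s₀ ^ 4)) / α := by
  have hlin : ∀ t, s₀ + α * (t - t₀) = α * t + (s₀ - α * t₀) := fun t => by ring
  simp only [hlin, integral_comp_mul_add (fun s => (k + b * s ^ 2) * s) hα,
    integral_add_mul_sq_mul, smul_eq_mul]
  rw [show α * t₀ + (s₀ - α * t₀) = s₀ by ring]
  field_simp

/-- The value `Q(100)` of the paper's piecewise per-100-m energy function
(eq. (5)) equals the efficiency-weighted integral of the instantaneous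
mechanical power over the full three-phase 100-meter trip, with discharge
factor `D` on the acceleration and cruising phases and recuperation factor `R`
on the deceleration phase. -/
theorem improvedEnergy_eq_integral_energy
    (v a C_r m g ρ A C_d D R : ℝ)
    (hv : 0 < v) (ha : 0 < a) (h100 : v^2 / a ≤ 100) :
    improvedEnergy v a C_r m g ρ A C_d D R 100
      = D * (∫ t in (0:ℝ)..(100 / v),
            (if t ≤ v / a then
                (C_r*m*g + (1/2)*ρ*A*C_d*(a*t)^2 + m*a) * (a*t)
             else if t ≤ 100 / v then
                (C_r*m*g + (1/2)*ρ*A*C_d*v^2) * v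
             else
                (C_r*m*g + (1/2)*ρ*A*C_d*(v - a*(t - 100/v))^2 - m*a)
                  * (v - a*(t - 100/v))))
        + R * (∫ t in (100/v : ℝ)..(100/v + v/a),
            (if t ≤ v / a then
                (C_r*m*g + (1/2)*ρ*A*C_d*(a*t)^2 + m*a) * (a*t)
             else if t ≤ 100 / v then
                (C_r*m*g + (1/2)*ρ*A*C_d*v^2) * v
             else
                (C_r*m*g + (1/2)*ρ*A*C_d*(v - a*(t - 100/v))^2 - m*a)
                  * (v - a*(t - 100/v)))) := by
  have hramp : 0 < v^2 / (2*a) := by positivity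
  have hramp_lt : v^2 / (2*a) < 100 := by rw [mul_comm, ← div_div]; linarith
  rw [improvedEnergy, if_neg hramp_lt.not_ge, if_neg (by linarith)]
  set c := C_r*m*g
  set b := (1/2)*ρ*A*C_d
  set P : ℝ → ℝ := fun t => if t ≤ v / a then (c + b*(a*t)^2 + m*a) * (a*t)
    else if t ≤ 100 / v then (c + b*v^2) * v
    else (c + b*(v - a*(t - 100/v))^2 - m*a) * (v - a*(t - 100/v))
  have hva : 0 ≤ v / a := by positivity
  have hcruise : v / a ≤ 100 / v := by
    rw [div_le_div_iff₀ ha hv]; nlinarith [(div_le_iff₀ ha).mp h100]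
  have hbrake : 100 / v ≤ 100 / v + v / a := le_add_of_nonneg_right hva
  have haccel_eq : EqOn P (fun t => ((c + m*a) + b*(0 + a*(t - 0))^2) * (0 + a*(t - 0)))
      (uIoo 0 (v / a)) := fun t ht => by
    rw [uIoo_of_le hva] at ht
    simp only [P, if_pos ht.2.le]; ring
  have hcruise_eq : EqOn P (fun _ => (c + b*v^2) * v) (uIoo (v / a) (100 / v)) := fun t ht => by
    rw [uIoo_of_le hcruise] at ht
    simp only [P, if_neg ht.1.not_ge, if_pos ht.2.le]
  have hbrake_eq : EqOn P
      (fun t => ((c - m*a) + b*(v + (-a)*(t - 100/v))^2) * (v + (-a)*(t - 100/v)))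
      (uIoo (100 / v) (100 / v + v / a)) := fun t ht => by
    rw [uIoo_of_le hbrake] at ht
    simp only [P, if_neg (hcruise.trans_lt ht.1).not_ge, if_neg ht.1.not_ge]; ring
  have haccel_int : IntervalIntegrable P volume 0 (v / a) :=
    (intervalIntegrable_congr_uIoo haccel_eq).2 (Continuous.intervalIntegrable (by fun_prop) _ _)
  have hcruise_int : IntervalIntegrable P volume (v / a) (100 / v) :=
    (intervalIntegrable_congr_uIoo hcruise_eq).2 intervalIntegrable_const
  rw [← integral_add_adjacent_intervals haccel_int hcruise_int, integral_congr_uIoo haccel_eq,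
    integral_congr_uIoo hcruise_eq, integral_congr_uIoo hbrake_eq,
    integral_add_mul_sq_mul_comp_affine _ _ _ _ _ _ ha.ne', intervalIntegral.integral_const,
    smul_eq_mul, integral_add_mul_sq_mul_comp_affine _ _ _ _ _ _ (neg_ne_zero.2 ha.ne')]
  field_simp
  ring
end

section
/- For every t with 0 < t ≤ 84.1, the paper's piecewise linear charging function satisfies SoC(t) ≥ ((0.325·84.1 + 122.7)/84.1)·t, with equality at t = 84.1. Hence the pessimistic criterion, which replaces the charging curve by the chord from the origin to the final observed point (84.1, SoC(84.1)), never overestimates the battery charge level attained after any charging time (equivalently, it overestimates the time required to reach any intermediate charge level). -/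
/-- The paper's piecewise linear charging function (eq. (6)). -/
noncomputable def soc (t : ℝ) : ℝ :=
  if t ≤ 50.4 then 2.5 * t
  else if t ≤ 61.5 then 1.5 * t + 50.4
  else 0.325 * t + 122.7

theorem mul_le_affine_of_le_at_endpoints {𝕜 : Type*} [Field 𝕜] [LinearOrder 𝕜]
    [IsStrictOrderedRing 𝕜] {a b c T t : 𝕜} (hb : 0 ≤ b) (hT : c * T ≤ a * T + b)
    (ht₀ : 0 ≤ t) (htT : t ≤ T) : c * t ≤ a * t + b := by
  rcases ht₀.eq_or_lt with rfl | ht₀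
  · simpa using hb
  · have hT₀ : 0 < T := ht₀.trans_le htT
    -- `(a t + b - c t) T = t (a T + b - c T) + b (T - t)`
    have hscaled : 0 ≤ (a * t + b - c * t) * T := by
      nlinarith [mul_nonneg ht₀.le (sub_nonneg.2 hT), mul_nonneg hb (sub_nonneg.2 htT)]
    linarith [nonneg_of_mul_nonneg_left hscaled hT₀]

/-- The pessimistic criterion, which replaces the charging curve by the chord
from the origin to the final observed point `(84.1, SoC(84.1))`, never
overestimates the charge level: `SoC(t) ≥ ((0.325·84.1 + 122.7)/84.1)·t` for
all `0 < t ≤ 84.1`, with equality at `t = 84.1`. -/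
theorem soc_ge_pessimistic :
    (∀ t : ℝ, 0 < t → t ≤ 84.1 →
      ((0.325 * 84.1 + 122.7) / 84.1) * t ≤ soc t) ∧
    soc 84.1 = ((0.325 * 84.1 + 122.7) / 84.1) * 84.1 := by
  refine ⟨fun t ht htT => ?_, by norm_num [soc]⟩
  -- each piece of `soc` is affine with nonnegative intercept and lies above the chord at `84.1`
  unfold soc
  split_ifs
  · simpa using mul_le_affine_of_le_at_endpoints (a := 2.5) le_rfl (by norm_num) ht.le htT
  · exact mul_le_affine_of_le_at_endpoints (by norm_num) (by norm_num) ht.le htT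
  · exact mul_le_affine_of_le_at_endpoints (by norm_num) (by norm_num) ht.le htT
end
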